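/- Let (r) be a pseudonoise sequence over F_m of order n (primitive characteristic polynomial, period m^n − 1), and let t_i = r_{pi+j} be the decimation with lag p > 0 and offset j. If gcd(m^n − 1, p) = 1 then (t) is again a pseudonoise sequence of order n (i.e., is generated by a primitive polynomial of degree n over F_m). -/

import Mathlib

/-!
The recurrence of an LFSR sequence `r` with characteristic polynomial `f` says `f(S) r = 0`, where
`S` is the shift operator on sequences. In `K = 𝔽_m[X]/(f)` the root `α` of `f` has order
`m^n - 1 = |Kˣ|`, so for `p` coprime to `m^n - 1` the power `β = α^p` generates `Kˣ` as well
and its minimal polynomial `g` is primitive of degree `n`. From `g(α^p) = 0` we get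
`f ∣ g(X^p)`, so `g(S^p) r = 0`, and this says exactly that `g(S)` kills the decimation
`i ↦ r (p*i + j)`. The least period `m^n - 1` survives because `i ↦ p*i + j` is onto modulo
`m^n - 1`.
-/

open Polynomial

/-- The characteristic polynomial `x^n - a₁ x^(n-1) - ... - aₙ`. -/
noncomputable def lfsrCharPoly (m n : ℕ) (a : Fin n → ZMod m) : Polynomial (ZMod m) :=
  Polynomial.X ^ n - ∑ k : Fin n, Polynomial.C (a k) * Polynomial.X ^ (n - (k.1 + 1))

/-- A pseudonoise sequence of order `n` over `F_m`: an LFSR sequence whose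
characteristic polynomial is primitive of degree `n` and whose least period is
`m^n - 1`. -/
def IsPseudonoise (m n : ℕ) (r : ℕ → ZMod m) : Prop :=
  ∃ a : Fin n → ZMod m,
    (∀ i, r (i + n) = ∑ k : Fin n, a k * r (i + n - (k.1 + 1))) ∧
    Irreducible (lfsrCharPoly m n a) ∧
    orderOf (AdjoinRoot.root (lfsrCharPoly m n a)) = m ^ n - 1 ∧
    IsLeast {T | 0 < T ∧ ∀ i, r (i + T) = r i} (m ^ n - 1)

section Shift

variable (R : Type*) [CommSemiring R]

def seqShift : Module.End R (ℕ → R) := LinearMap.funLeft R R (· + 1)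

variable {R}

@[simp]
theorem seqShift_pow_apply (k : ℕ) (u : ℕ → R) (i : ℕ) :
    (seqShift R ^ k) u i = u (i + k) := by
  induction k generalizing u with
  | zero => rfl
  | succ k ih => rw [pow_succ, Module.End.mul_apply, ih]; rfl

theorem aeval_seqShift_pow_apply (p : ℕ) (q : R[X]) (u : ℕ → R) (i : ℕ) :
    aeval (seqShift R ^ p) q u i = q.sum fun k c => c * u (i + p * k) := by
  rw [aeval_def, eval₂_eq_sum]
  simp [Polynomial.sum, ← pow_mul]

theorem aeval_seqShift_apply (q : R[X]) (u : ℕ → R) (i : ℕ) :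
    aeval (seqShift R) q u i = q.sum fun k c => c * u (i + k) := by
  simpa using aeval_seqShift_pow_apply 1 q u i

theorem aeval_seqShift_decimate (p j : ℕ) (q : R[X]) (u : ℕ → R) :
    aeval (seqShift R) q (fun i => u (p * i + j)) =
      fun i => aeval (seqShift R) (expand R p q) u (p * i + j) := by
  ext i
  rw [expand_aeval, aeval_seqShift_pow_apply, aeval_seqShift_apply]
  refine Finset.sum_congr rfl fun k _ => ?_
  ring_nf

theorem aeval_seqShift_decimate_eq_zero {p j : ℕ} {f g : R[X]} {u : ℕ → R}
    (hfg : f ∣ expand R p g) (hu : aeval (seqShift R) f u = 0) :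
    aeval (seqShift R) g (fun i => u (p * i + j)) = 0 := by
  obtain ⟨c, hc⟩ := hfg
  have hexpand : aeval (seqShift R) (expand R p g) u = 0 := by
    rw [hc, mul_comm, map_mul, Module.End.mul_apply, hu, map_zero]
  rw [aeval_seqShift_decimate, hexpand]
  rfl

end Shift

theorem LinearRecurrence.isSolution_iff_aeval_charPoly {R : Type*} [CommRing R]
    (E : LinearRecurrence R) (u : ℕ → R) :
    E.IsSolution u ↔ aeval (seqShift R) E.charPoly u = 0 := by
  simp [funext_iff, LinearRecurrence.IsSolution, LinearRecurrence.charPoly, sub_eq_zero]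

section Lfsr

variable {m n : ℕ}

/-- `LinearRecurrence` weights `u (i + k)` by its `k`-th coefficient, while `a k` weights the lag
`k + 1`, i.e. `u (i + n - (k + 1))`; hence the reversal. -/
def lfsrRecurrence (a : Fin n → ZMod m) : LinearRecurrence (ZMod m) := ⟨n, a ∘ Fin.rev⟩

theorem charPoly_lfsrRecurrence (a : Fin n → ZMod m) :
    (lfsrRecurrence a).charPoly = lfsrCharPoly m n a := by
  rw [LinearRecurrence.charPoly, lfsrCharPoly, ← C_mul_X_pow_eq_monomial, C_1, one_mul]
  simp only [← C_mul_X_pow_eq_monomial, lfsrRecurrence, Function.comp_apply]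
  congr 1
  refine Fintype.sum_equiv Fin.revPerm _ _ fun k => ?_
  rw [Fin.revPerm_apply, Fin.val_rev]
  congr 2
  omega

theorem isSolution_lfsrRecurrence_iff (a : Fin n → ZMod m) (u : ℕ → ZMod m) :
    (lfsrRecurrence a).IsSolution u ↔
      ∀ i, u (i + n) = ∑ k : Fin n, a k * u (i + n - (k.1 + 1)) := by
  show (∀ i, u (i + n) = ∑ k : Fin n, a k.rev * u (i + k)) ↔ _
  refine forall_congr' fun i => Eq.congr_right ?_
  refine Fintype.sum_equiv Fin.revPerm _ _ fun k => ?_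
  rw [Fin.revPerm_apply, Fin.val_rev]
  congr 2
  omega

theorem aeval_seqShift_lfsrCharPoly_eq_zero_iff (a : Fin n → ZMod m) (u : ℕ → ZMod m) :
    aeval (seqShift (ZMod m)) (lfsrCharPoly m n a) u = 0 ↔
      ∀ i, u (i + n) = ∑ k : Fin n, a k * u (i + n - (k.1 + 1)) := by
  rw [← charPoly_lfsrRecurrence, ← LinearRecurrence.isSolution_iff_aeval_charPoly,
    isSolution_lfsrRecurrence_iff]

theorem lfsrCharPoly_monic (a : Fin n → ZMod m) : (lfsrCharPoly m n a).Monic :=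
  charPoly_lfsrRecurrence a ▸ LinearRecurrence.charPoly_monic _

theorem natDegree_lfsrCharPoly [Fact (1 < m)] (a : Fin n → ZMod m) :
    (lfsrCharPoly m n a).natDegree = n :=
  natDegree_eq_of_degree_eq_some
    (charPoly_lfsrRecurrence a ▸ LinearRecurrence.charPoly_degree_eq_order _)

theorem lfsrCharPoly_neg_coeff_rev {g : (ZMod m)[X]} (hg : g.Monic) (hn : g.natDegree = n) :
    lfsrCharPoly m n (fun k => -g.coeff k.rev) = g := by
  subst hn
  rw [← charPoly_lfsrRecurrence]
  conv_rhs => rw [hg.as_sum]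
  simp only [LinearRecurrence.charPoly, lfsrRecurrence, Fin.val_rev, ← C_mul_X_pow_eq_monomial,
    map_one, one_mul, Function.comp_apply, map_neg, Finset.sum_neg_distrib,
    sub_neg_eq_add, add_right_inj]
  rw [← Fin.sum_univ_eq_sum_range (fun i => C (g.coeff i) * X ^ i)]
  refine Fintype.sum_congr _ _ fun k => ?_
  congr 3
  omega

end Lfsr

section Periodic

open Function

variable {α : Type*} {u : ℕ → α} {T : ℕ}

theorem Function.Periodic.map_of_modEq (hu : Periodic u T) {a b : ℕ} (hab : a ≡ b [MOD T]) :
    u a = u b := by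
  have map_mod (x : ℕ) : u (x % T) = u x := by
    rw [← (hu.nat_mul (x / T)) (x % T), Nat.cast_id, Nat.mod_add_div']
  rw [← map_mod a, ← map_mod b, hab]

theorem Function.Periodic.dvd_of_isLeast (hT : IsLeast {S | 0 < S ∧ Periodic u S} T) {S : ℕ}
    (hS : Periodic u S) : T ∣ S := by
  by_contra hTS
  have hmod : Periodic u (S % T) := fun x =>
    (hT.1.2.map_of_modEq ((Nat.mod_modEq S T).add_left x)).trans (hS x)
  exact (Nat.mod_lt S hT.1.1).not_ge
    (hT.2 ⟨Nat.pos_of_ne_zero (mt Nat.dvd_of_mod_eq_zero hTS), hmod⟩)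

theorem Function.Periodic.decimate (hu : Periodic u T) (p j : ℕ) :
    Periodic (fun i => u (p * i + j)) T := fun i => by
  show u (p * (i + T) + j) = u (p * i + j)
  rw [mul_add, add_right_comm]
  exact hu.nat_mul p _

theorem Nat.exists_mul_add_modEq [NeZero T] {p : ℕ} (hp : Nat.Coprime p T) (j x : ℕ) :
    ∃ i, p * i + j ≡ x [MOD T] := by
  refine ⟨(((ZMod.unitOfCoprime p hp)⁻¹ : (ZMod T)ˣ) * ((x : ZMod T) - j)).val, ?_⟩
  rw [← ZMod.natCast_eq_natCast_iff]
  push_cast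
  rw [ZMod.natCast_zmod_val, ← mul_assoc, ← ZMod.coe_unitOfCoprime p hp, Units.mul_inv, one_mul,
    sub_add_cancel]

theorem Function.Periodic.of_decimate [NeZero T] (hu : Periodic u T) {p j S : ℕ}
    (hp : Nat.Coprime p T) (hS : Periodic (fun i => u (p * i + j)) S) : Periodic u (p * S) := by
  intro x
  obtain ⟨i, hi⟩ := Nat.exists_mul_add_modEq hp j x
  calc u (x + p * S) = u (p * (i + S) + j) := by
        rw [mul_add, add_right_comm]
        exact hu.map_of_modEq (hi.add_right _).symm
    _ = u (p * i + j) := hS i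
    _ = u x := hu.map_of_modEq hi

theorem Function.Periodic.isLeast_decimate (hT : IsLeast {S | 0 < S ∧ Periodic u S} T) {p : ℕ}
    (hp : Nat.Coprime p T) (j : ℕ) :
    IsLeast {S | 0 < S ∧ Periodic (fun i => u (p * i + j)) S} T := by
  have : NeZero T := ⟨hT.1.1.ne'⟩
  refine ⟨⟨hT.1.1, hT.1.2.decimate p j⟩, fun S ⟨hS0, hS⟩ => Nat.le_of_dvd hS0 ?_⟩
  exact hp.symm.dvd_of_dvd_mul_left ((hT.1.2.of_decimate hp hS).dvd_of_isLeast hT)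

end Periodic

open scoped IntermediateField

theorem IntermediateField.adjoin_simple_eq_top_of_orderOf_eq {F K : Type*} [Field F] [Field K]
    [Algebra F K] [Finite K] {β : K} (h : orderOf β = Nat.card K - 1) : F⟮β⟯ = ⊤ := by
  have hβ : β ≠ 0 := by
    rintro rfl
    rw [orderOf_zero] at h
    have := Finite.one_lt_card (α := K)
    omega
  have hgen : Subgroup.zpowers (Units.mk0 β hβ) = ⊤ := by
    rw [← Subgroup.card_eq_iff_eq_top, Nat.card_zpowers, ← orderOf_units, Units.val_mk0, h,
      Nat.card_units]
  rw [eq_top_iff]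
  rintro x -
  rcases eq_or_ne x 0 with rfl | hx
  · exact zero_mem _
  obtain ⟨k, hk⟩ := Subgroup.mem_zpowers_iff.mp (hgen ▸ Subgroup.mem_top (Units.mk0 x hx))
  rw [← Units.val_mk0 hx, ← hk, Units.val_zpow_eq_zpow_val, Units.val_mk0]
  exact zpow_mem (mem_adjoin_simple_self F β) k

theorem minpoly.natDegree_eq_finrank_of_orderOf_eq {F K : Type*} [Field F] [Field K]
    [Algebra F K] [Finite K] {β : K} (h : orderOf β = Nat.card K - 1) :
    (minpoly F β).natDegree = Module.finrank F K := by
  rw [← IntermediateField.adjoin.finrank (.of_finite F β),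
    IntermediateField.adjoin_simple_eq_top_of_orderOf_eq h, IntermediateField.finrank_top']

theorem AdjoinRoot.orderOf_root_minpoly {F K : Type*} [Field F] [Field K] [Algebra F K] {x : K}
    (hx : IsIntegral F x) : orderOf (root (minpoly F x)) = orderOf x := by
  have := Fact.mk (minpoly.irreducible hx)
  have hev : (minpoly F x).eval₂ (algebraMap F K) x = 0 := minpoly.aeval F x
  calc orderOf (root (minpoly F x)) = orderOf (lift _ x hev (root (minpoly F x))) :=
        (orderOf_injective (lift _ x hev).toMonoidHom (lift _ x hev).injective _).symm
    _ = orderOf x := by rw [lift_root]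

theorem decimation_of_pseudonoise_general (m n p j : ℕ) [Fact (Nat.Prime m)]
    (r : ℕ → ZMod m) (hr : IsPseudonoise m n r)
    (hgcd : Nat.gcd (m ^ n - 1) p = 1) :
    IsPseudonoise m n (fun i => r (p * i + j)) := by
  obtain ⟨a, hrec, hirr, hord, hper⟩ := hr
  have hco : Nat.Coprime (m ^ n - 1) p := hgcd
  set f := lfsrCharPoly m n a
  have hf : f.Monic := lfsrCharPoly_monic a
  have := Fact.mk hirr
  have := (AdjoinRoot.powerBasis hf.ne_zero).finite
  have := Module.finite_of_finite (ZMod m) (M := AdjoinRoot f)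
  have hrank : Module.finrank (ZMod m) (AdjoinRoot f) = n := by
    rw [(AdjoinRoot.powerBasis hf.ne_zero).finrank, AdjoinRoot.powerBasis_dim,
      natDegree_lfsrCharPoly]
  set β := AdjoinRoot.root f ^ p
  have hβ : orderOf β = m ^ n - 1 := by rw [Nat.Coprime.orderOf_pow (hord ▸ hco), hord]
  have hβint : IsIntegral (ZMod m) β := .of_finite _ _
  set g := minpoly (ZMod m) β
  have hβcard : orderOf β = Nat.card (AdjoinRoot f) - 1 := by
    rw [hβ, Module.natCard_eq_pow_finrank (K := ZMod m), hrank, Nat.card_zmod]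
  have hg : lfsrCharPoly m n (fun k => -g.coeff k.rev) = g :=
    lfsrCharPoly_neg_coeff_rev (minpoly.monic hβint)
      ((minpoly.natDegree_eq_finrank_of_orderOf_eq hβcard).trans hrank)
  have hdvd : f ∣ expand (ZMod m) p g := by
    rw [← AdjoinRoot.minpoly_powerBasis_gen_of_monic hf, AdjoinRoot.powerBasis_gen]
    exact minpoly.dvd _ _ (by rw [expand_aeval, minpoly.aeval])
  have hdec := aeval_seqShift_decimate_eq_zero (j := j) hdvd
    ((aeval_seqShift_lfsrCharPoly_eq_zero_iff a r).mpr hrec)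
  rw [← hg] at hdec
  refine ⟨fun k => -g.coeff k.rev, (aeval_seqShift_lfsrCharPoly_eq_zero_iff _ _).mp hdec, ?_, ?_,
    Function.Periodic.isLeast_decimate hper hco.symm j⟩
  · rw [hg]
    exact minpoly.irreducible hβint
  · rw [hg, AdjoinRoot.orderOf_root_minpoly hβint, hβ]

/-- If `gcd(m^n - 1, p) = 1`, the decimation `t i = r (p*i + j)` of a pseudonoise
sequence of order `n` over `F_m` is again a pseudonoise sequence of order `n`. -/
theorem decimation_of_pseudonoise (m n p j : ℕ) [Fact (Nat.Prime m)] (hn : 0 < n)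
    (hp : 0 < p) (r : ℕ → ZMod m) (hr : IsPseudonoise m n r)
    (hgcd : Nat.gcd (m ^ n - 1) p = 1) :
    IsPseudonoise m n (fun i => r (p * i + j)) :=
  decimation_of_pseudonoise_general m n p j r hr hgcd
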